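/- arXiv:1509.04744 — 2 statements merged into one kernel-verified Lean document; each statement's English description precedes it below -/
import Mathlib

section
/- Let a₁, a₂, a₃ ∈ ℝ³ be three points that are not collinear (i.e., a₂ − a₁ and a₃ − a₁ are linearly independent). Then the stacked 9×6 matrix 𝔾 = [G(a₁); G(a₂); G(a₃)] with G(a) = [a^× −I] has full column rank 6. -/
open Matrix

noncomputable def hat (v : Fin 3 → ℝ) : Matrix (Fin 3) (Fin 3) ℝ :=
  !![0, -v 2, v 1; v 2, 0, -v 0; -v 1, v 0, 0]

noncomputable def Gmat (a : Fin 3 → ℝ) : Matrix (Fin 3) (Fin 3 ⊕ Fin 3) ℝ :=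
  Matrix.of fun i => Sum.elim (fun j => hat a i j) (fun j => -(1 : Matrix (Fin 3) (Fin 3) ℝ) i j)

/-- The stacked matrix 𝔾 = [G(a₁); G(a₂); G(a₃)]. -/
noncomputable def Gstack (a₁ a₂ a₃ : Fin 3 → ℝ) :
    Matrix (Fin 3 ⊕ (Fin 3 ⊕ Fin 3)) (Fin 3 ⊕ Fin 3) ℝ :=
  Matrix.of (Sum.elim (Gmat a₁) (Sum.elim (Gmat a₂) (Gmat a₃)))

/-!
A kernel vector `Sum.elim ω v` of `Gstack a₁ a₂ a₃` is a rigid motion under which all three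
points are at rest: `aᵢ × ω = v` for each `i`. Subtracting, `ω` is parallel to both
`a₂ - a₁` and `a₃ - a₁`; as these are independent, `ω = 0`, and then `v = a₁ × ω = 0`.
-/

theorem Matrix.rank_eq_card_width_of_mulVec_eq_zero {m n K : Type*} [Fintype n] [Field K]
    (A : Matrix m n K) (h : ∀ v, A *ᵥ v = 0 → v = 0) : A.rank = Fintype.card n := by
  rw [Matrix.rank, LinearMap.finrank_range_of_inj
    (LinearMap.ker_eq_bot.mp (Matrix.ker_mulVecLin_eq_bot_iff.mpr h)),
    Module.finrank_fintype_fun_eq_card]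

theorem exists_smul_eq_of_cross_eq_zero {K : Type*} [Field K] {x ω : Fin 3 → K} (hω : ω ≠ 0)
    (hx : x ⨯₃ ω = 0) : ∃ c : K, c • ω = x := by
  by_contra! hc
  have hωx : LinearIndependent K ![ω, x] := (LinearIndependent.pair_iff' hω).mpr hc
  have hxω : LinearIndependent K ![x, ω] := LinearIndependent.pair_symm_iff.mp hωx
  exact crossProduct_ne_zero_iff_linearIndependent.mpr hxω hx

theorem eq_zero_of_cross_eq_zero_of_linearIndependent {K : Type*} [Field K] {u w ω : Fin 3 → K}
    (h : LinearIndependent K ![u, w]) (hu : u ⨯₃ ω = 0) (hw : w ⨯₃ ω = 0) : ω = 0 := by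
  by_contra hω
  obtain ⟨a, rfl⟩ := exists_smul_eq_of_cross_eq_zero hω hu
  obtain ⟨b, rfl⟩ := exists_smul_eq_of_cross_eq_zero hω hw
  apply crossProduct_ne_zero_iff_linearIndependent.mpr h
  simp only [map_smul, LinearMap.smul_apply, cross_self, smul_zero]

theorem hat_mulVec (v w : Fin 3 → ℝ) : hat v *ᵥ w = v ⨯₃ w := by
  ext i
  fin_cases i <;> simp [hat, cross_apply, mulVec, dotProduct, Fin.sum_univ_three] <;> ring

theorem Gmat_mulVec_sumElim (a ω v : Fin 3 → ℝ) : Gmat a *ᵥ Sum.elim ω v = a ⨯₃ ω - v := by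
  rw [show Gmat a = fromCols (hat a) (-1) from rfl, fromCols_mulVec_sumElim, hat_mulVec,
    neg_mulVec, one_mulVec, sub_eq_add_neg]

theorem Gstack_mulVec_sumElim_eq_zero_iff (a₁ a₂ a₃ ω v : Fin 3 → ℝ) :
    Gstack a₁ a₂ a₃ *ᵥ Sum.elim ω v = 0 ↔ a₁ ⨯₃ ω = v ∧ a₂ ⨯₃ ω = v ∧ a₃ ⨯₃ ω = v := by
  rw [show Gstack a₁ a₂ a₃ = fromRows (Gmat a₁) (fromRows (Gmat a₂) (Gmat a₃)) from rfl]
  simp only [fromRows_mulVec, Gmat_mulVec_sumElim, ← Sum.elim_zero_zero, Sum.elim_eq_iff,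
    sub_eq_zero]

/-- For three non-collinear points, the stacked matrix 𝔾 has full column rank 6. -/
theorem Gstack_full_column_rank (a₁ a₂ a₃ : Fin 3 → ℝ)
    (h : LinearIndependent ℝ ![a₂ - a₁, a₃ - a₁]) :
    (Gstack a₁ a₂ a₃).rank = 6 := by
  refine (Gstack a₁ a₂ a₃).rank_eq_card_width_of_mulVec_eq_zero fun x hx => ?_
  rw [← Sum.elim_comp_inl_inr x] at hx ⊢
  obtain ⟨h₁, h₂, h₃⟩ := (Gstack_mulVec_sumElim_eq_zero_iff _ _ _ _ _).mp hx
  have hω : x ∘ Sum.inl = 0 := eq_zero_of_cross_eq_zero_of_linearIndependent h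
    (by rw [map_sub, LinearMap.sub_apply, h₁, h₂, sub_self])
    (by rw [map_sub, LinearMap.sub_apply, h₁, h₃, sub_self])
  have hv : x ∘ Sum.inr = 0 := by rw [← h₁, hω, map_zero]
  rw [hω, hv, Sum.elim_zero_zero]
end

section
/- With D = RL, L ∈ ℝ^{3×n}, W symmetric positive definite, and U(R̂) = ½ trace((D − R̂L)ᵀ(D − R̂L)W): if rank(L) ≥ 2, then U(R̂) = 0 implies R̂ = R. -/
/-!
Since `W` is positive definite, `trace ((D - R̂ L)ᵀ (D - R̂ L) W)` is the sum of the values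
of the quadratic form of `W` at the rows of `D - R̂ L`, so zero cost forces `R̂ L = R L`.
Then `A = Rᵀ R̂` is a rotation fixing the column space of `L`, which contains two independent
vectors `u, v`. Rotations preserve cross products, so `A` also fixes `u × v`, and `u, v, u × v`
is a basis.
-/

open Matrix

def SO3 (R : Matrix (Fin 3) (Fin 3) ℝ) : Prop := Rᵀ * R = 1 ∧ R.det = 1

open scoped ComplexOrder

theorem Matrix.PosDef.trace_conjTranspose_mul_self_mul_eq_zero_iff {m n 𝕜 : Type*} [Fintype m]
    [Fintype n] [RCLike 𝕜] {W : Matrix n n 𝕜} (hW : W.PosDef) (M : Matrix m n 𝕜) :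
    (Mᴴ * M * W).trace = 0 ↔ M = 0 := by
  refine ⟨fun h => ?_, fun h => by simp [h]⟩
  have hsandwich : M * W * Mᴴ = 0 := by
    rw [← (hW.posSemidef.mul_mul_conjTranspose_same M).trace_eq_zero_iff, ← h,
      trace_mul_cycle, Matrix.mul_assoc, trace_mul_comm]
  funext i
  by_contra hi
  have hdiag : (M * W * Mᴴ) i i = M i ⬝ᵥ W *ᵥ star (M i) := by
    simp only [mul_apply, dotProduct, mulVec, conjTranspose_apply, Pi.star_apply, Finset.sum_mul,
      Finset.mul_sum, mul_assoc]
    exact Finset.sum_comm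
  have hpos := hW.dotProduct_mulVec_pos (x := star (M i)) (star_ne_zero.mpr hi)
  rw [star_star, ← hdiag, hsandwich, zero_apply] at hpos
  exact lt_irrefl 0 hpos

theorem Matrix.exists_linearIndependent_mulVec_pair {m n K : Type*} [Fintype n] [Field K]
    {L : Matrix m n K} (hL : 2 ≤ L.rank) :
    ∃ x y : n → K, LinearIndependent K ![L *ᵥ x, L *ᵥ y] := by
  obtain ⟨f, hf⟩ := exists_linearIndependent_of_le_finrank hL
  obtain ⟨x, hx⟩ := (f 0).2
  obtain ⟨y, hy⟩ := (f 1).2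
  have hpair : ![L *ᵥ x, L *ᵥ y] = (LinearMap.range L.mulVecLin).subtype ∘ f := by
    ext i : 1
    fin_cases i
    exacts [hx, hy]
  exact ⟨x, y, hpair ▸ hf.map' _ (LinearMap.range L.mulVecLin).ker_subtype⟩

theorem Matrix.crossProduct_mulVec_mulVec {R : Type*} [CommRing R] (A : Matrix (Fin 3) (Fin 3) R)
    (u v : Fin 3 → R) : (A *ᵥ u) ⨯₃ (A *ᵥ v) = A.adjugateᵀ *ᵥ (u ⨯₃ v) := by
  ext i
  fin_cases i <;>
    simp [adjugate_fin_three, cross_apply, mulVec, dotProduct, Fin.sum_univ_three] <;> ring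

namespace SO3

variable {A B : Matrix (Fin 3) (Fin 3) ℝ}

theorem mul_transpose_self (hA : SO3 A) : A * Aᵀ = 1 := mul_eq_one_comm.mp hA.1

theorem transpose_mul (hA : SO3 A) (hB : SO3 B) : SO3 (Aᵀ * B) := by
  refine ⟨?_, by rw [det_mul, det_transpose, hA.2, hB.2, one_mul]⟩
  rw [Matrix.transpose_mul, transpose_transpose, Matrix.mul_assoc, ← Matrix.mul_assoc A,
    hA.mul_transpose_self, Matrix.one_mul, hB.1]

theorem adjugate_eq_transpose (hA : SO3 A) : A.adjugate = Aᵀ := by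
  calc A.adjugate = Aᵀ * A * A.adjugate := by rw [hA.1, Matrix.one_mul]
    _ = Aᵀ := by rw [Matrix.mul_assoc, mul_adjugate, hA.2, one_smul, Matrix.mul_one]

theorem mulVec_crossProduct (hA : SO3 A) (u v : Fin 3 → ℝ) :
    A *ᵥ (u ⨯₃ v) = (A *ᵥ u) ⨯₃ (A *ᵥ v) := by
  rw [crossProduct_mulVec_mulVec, hA.adjugate_eq_transpose, transpose_transpose]

theorem eq_one_of_mulVec_eq_self (hA : SO3 A) {u v : Fin 3 → ℝ}
    (huv : LinearIndependent ℝ ![u, v]) (hu : A *ᵥ u = u) (hv : A *ᵥ v = v) : A = 1 := by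
  set w := u ⨯₃ v
  have hw : A *ᵥ w = w := by rw [hA.mulVec_crossProduct, hu, hv]
  set P : Matrix (Fin 3) (Fin 3) ℝ := ![u, v, w]
  have hP : IsUnit P := by
    have hdet : P.det = w ⬝ᵥ w := by
      rw [← triple_product_eq_det, triple_product_permutation, triple_product_permutation]
    rw [isUnit_iff_isUnit_det, hdet, isUnit_iff_ne_zero]
    exact fun h => crossProduct_ne_zero_iff_linearIndependent.mpr huv (dotProduct_self_eq_zero.mp h)
  have hPA : P * Aᵀ = P * 1 := by
    rw [Matrix.mul_one]
    funext i
    rw [mul_apply_eq_vecMul, vecMul_transpose]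
    fin_cases i
    exacts [hu, hv, hw]
  rw [← transpose_transpose A, hP.mul_left_cancel hPA, transpose_one]

theorem eq_one_of_mul_eq_self {n : ℕ} (hA : SO3 A) {L : Matrix (Fin 3) (Fin n) ℝ}
    (hAL : A * L = L) (hL : 2 ≤ L.rank) : A = 1 := by
  obtain ⟨x, y, hxy⟩ := exists_linearIndependent_mulVec_pair hL
  have hfix (z : Fin n → ℝ) : A *ᵥ (L *ᵥ z) = L *ᵥ z := by rw [mulVec_mulVec, hAL]
  exact hA.eq_one_of_mulVec_eq_self hxy (hfix x) (hfix y)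

end SO3

/-- If rank(L) ≥ 2, the minimum of Wahba's cost function is unique:
U(R̂) = 0 implies R̂ = R. -/
theorem wahba_unique_minimum {n : ℕ}
    (R R' : Matrix (Fin 3) (Fin 3) ℝ) (hR : SO3 R) (hR' : SO3 R')
    (D L : Matrix (Fin 3) (Fin n) ℝ) (hD : D = R * L) (hL : 2 ≤ L.rank)
    (W : Matrix (Fin n) (Fin n) ℝ) (hW : W.PosDef)
    (U : Matrix (Fin 3) (Fin 3) ℝ → ℝ)
    (hU : ∀ R₀, U R₀ = (1 / 2) * ((D - R₀ * L)ᵀ * (D - R₀ * L) * W).trace)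
    (hzero : U R' = 0) : R' = R := by
  have hresidual : D - R' * L = 0 := by
    refine (hW.trace_conjTranspose_mul_self_mul_eq_zero_iff _).mp ?_
    rw [conjTranspose_eq_transpose_of_trivial]
    linarith [hU R']
  have hfix : (Rᵀ * R') * L = L := by
    rw [Matrix.mul_assoc, ← sub_eq_zero.mp hresidual, hD, ← Matrix.mul_assoc, hR.1,
      Matrix.one_mul]
  calc R' = R * (Rᵀ * R') := by rw [← Matrix.mul_assoc, hR.mul_transpose_self, Matrix.one_mul]
    _ = R := by rw [(hR.transpose_mul hR').eq_one_of_mul_eq_self hfix hL, Matrix.mul_one]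
end
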